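/- arXiv:2112.06900 — 2 statements merged into one kernel-verified Lean document; each statement's English description precedes it below -/
import Mathlib

section
/- For every triple Φ₀, Ψ, Φ of unit vectors in a complex inner product space E, one has | |⟨Φ, Ψ⟩|² − |⟨Φ₀, Φ⟩|² | ≤ arccos|⟨Φ₀, Ψ⟩|. -/
open scoped InnerProductSpace
open Real

/-!
Viewing `E` as a real inner product space, `arccos |⟨x, y⟩|` is the smallest real angle between
`x` and a phase multiple `c • y`, so the Bures angle inherits the triangle inequality of the real
angle. Writing `A`, `B`, `C` for the Bures angles of `(Φ, Ψ)`, `(Φ₀, Φ)` and `(Φ₀, Ψ)`, the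
triangle inequality gives `|A - B| ≤ C`, and `cos²` is `1`-Lipschitz, so
`| |⟨Φ, Ψ⟩|² - |⟨Φ₀, Φ⟩|² | = |cos² A - cos² B| ≤ |A - B| ≤ C`.
-/

lemma abs_cos_sq_sub_cos_sq_le (a b : ℝ) : |cos a ^ 2 - cos b ^ 2| ≤ |a - b| := by
  have hdiff : cos a ^ 2 - cos b ^ 2 = (cos (2 * a) - cos (2 * b)) / 2 := by
    rw [cos_sq a, cos_sq b]; ring
  calc |cos a ^ 2 - cos b ^ 2| = |cos (2 * a) - cos (2 * b)| / 2 := by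
        rw [hdiff, abs_div, abs_two]
    _ ≤ |2 * a - 2 * b| / 2 := by linarith [abs_cos_sub_cos_le (2 * a) (2 * b)]
    _ = |a - b| := by rw [← mul_sub, abs_mul, abs_two]; ring

lemma Complex.exists_norm_eq_one_mul_eq_norm (z : ℂ) : ∃ c : ℂ, ‖c‖ = 1 ∧ c * z = ‖z‖ := by
  refine ⟨Complex.exp (-z.arg * Complex.I), by exact_mod_cast Complex.norm_exp_ofReal_mul_I _, ?_⟩
  conv_lhs => rw [← Complex.norm_mul_exp_arg_mul_I z]
  rw [mul_left_comm, ← Complex.exp_add]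
  simp

section BuresAngle

variable {E : Type*} [NormedAddCommGroup E] [InnerProductSpace ℂ E]

-- Intended for unit vectors: the inner product is not normalised.
noncomputable def buresAngle (x y : E) : ℝ := arccos ‖⟪x, y⟫_ℂ‖

lemma buresAngle_comm (x y : E) : buresAngle x y = buresAngle y x := by
  rw [buresAngle, buresAngle, norm_inner_symm]

lemma buresAngle_smul_left {c : ℂ} (hc : ‖c‖ = 1) (x y : E) :
    buresAngle (c • x) y = buresAngle x y := by
  rw [buresAngle, buresAngle, inner_smul_left, norm_mul, Complex.norm_conj, hc, one_mul]

lemma buresAngle_smul_right {c : ℂ} (hc : ‖c‖ = 1) (x y : E) :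
    buresAngle x (c • y) = buresAngle x y := by
  rw [buresAngle, buresAngle, inner_smul_right, norm_mul, hc, one_mul]

lemma cos_buresAngle {x y : E} (hx : ‖x‖ = 1) (hy : ‖y‖ = 1) :
    cos (buresAngle x y) = ‖⟪x, y⟫_ℂ‖ := by
  have hle : ‖⟪x, y⟫_ℂ‖ ≤ 1 := by simpa [hx, hy] using norm_inner_le_norm (𝕜 := ℂ) x y
  exact cos_arccos (by linarith [norm_nonneg ⟪x, y⟫_ℂ]) hle

attribute [local instance] InnerProductSpace.complexToReal

lemma angle_eq_arccos_re_inner {x y : E} (hx : ‖x‖ = 1) (hy : ‖y‖ = 1) :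
    InnerProductGeometry.angle x y = arccos (⟪x, y⟫_ℂ).re := by
  rw [InnerProductGeometry.angle, hx, hy, mul_one, div_one]
  rfl

lemma buresAngle_le_angle {x y : E} (hx : ‖x‖ = 1) (hy : ‖y‖ = 1) :
    buresAngle x y ≤ InnerProductGeometry.angle x y := by
  rw [angle_eq_arccos_re_inner hx hy]
  exact arccos_le_arccos (Complex.re_le_norm _)

lemma exists_angle_smul_eq_buresAngle {x y : E} (hx : ‖x‖ = 1) (hy : ‖y‖ = 1) :
    ∃ c : ℂ, ‖c‖ = 1 ∧ InnerProductGeometry.angle x (c • y) = buresAngle x y := by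
  obtain ⟨c, hc, hphase⟩ := Complex.exists_norm_eq_one_mul_eq_norm ⟪x, y⟫_ℂ
  refine ⟨c, hc, ?_⟩
  rw [angle_eq_arccos_re_inner hx (by rw [norm_smul, hc, hy, one_mul]), inner_smul_right, hphase,
    Complex.ofReal_re, buresAngle]

lemma buresAngle_le_buresAngle_add_buresAngle {x y z : E}
    (hx : ‖x‖ = 1) (hy : ‖y‖ = 1) (hz : ‖z‖ = 1) :
    buresAngle x z ≤ buresAngle x y + buresAngle y z := by
  obtain ⟨c, hc, hxy⟩ := exists_angle_smul_eq_buresAngle hx hy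
  have hcy : ‖c • y‖ = 1 := by rw [norm_smul, hc, hy, one_mul]
  obtain ⟨d, hd, hyz⟩ := exists_angle_smul_eq_buresAngle hcy hz
  calc buresAngle x z = buresAngle x (d • z) := (buresAngle_smul_right hd x z).symm
    _ ≤ InnerProductGeometry.angle x (d • z) :=
        buresAngle_le_angle hx (by rw [norm_smul, hd, hz, one_mul])
    _ ≤ InnerProductGeometry.angle x (c • y) + InnerProductGeometry.angle (c • y) (d • z) :=
        InnerProductGeometry.angle_le_angle_add_angle _ _ _
    _ = buresAngle x y + buresAngle y z := by rw [hxy, hyz, buresAngle_smul_left hc]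

end BuresAngle

/-- Previous bound: for unit vectors `Φ₀, Ψ, Φ`,
`| |⟨Φ, Ψ⟩|² - |⟨Φ₀, Φ⟩|² | ≤ arccos |⟨Φ₀, Ψ⟩|`. -/
theorem fidelity_diff_le_arccos
    {E : Type*} [NormedAddCommGroup E] [InnerProductSpace ℂ E]
    (Φ₀ Ψ Φ : E) (hΦ₀ : ‖Φ₀‖ = 1) (hΨ : ‖Ψ‖ = 1) (hΦ : ‖Φ‖ = 1) :
    |‖⟪Φ, Ψ⟫_ℂ‖ ^ 2 - ‖⟪Φ₀, Φ⟫_ℂ‖ ^ 2|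
      ≤ Real.arccos ‖⟪Φ₀, Ψ⟫_ℂ‖ := by
  have h₁ := buresAngle_le_buresAngle_add_buresAngle hΦ hΦ₀ hΨ
  have h₂ := buresAngle_le_buresAngle_add_buresAngle hΦ₀ hΨ hΦ
  rw [buresAngle_comm Φ Φ₀] at h₁
  rw [buresAngle_comm Ψ Φ] at h₂
  calc |‖⟪Φ, Ψ⟫_ℂ‖ ^ 2 - ‖⟪Φ₀, Φ⟫_ℂ‖ ^ 2|
      = |cos (buresAngle Φ Ψ) ^ 2 - cos (buresAngle Φ₀ Φ) ^ 2| := by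
        rw [cos_buresAngle hΦ hΨ, cos_buresAngle hΦ₀ hΦ]
    _ ≤ |buresAngle Φ Ψ - buresAngle Φ₀ Φ| := abs_cos_sq_sub_cos_sq_le _ _
    _ ≤ buresAngle Φ₀ Ψ := abs_sub_le_iff.2 ⟨by linarith, by linarith⟩
end

section
/- Quantum speed limit: let H : ℝ → (E →L[ℂ] E) be a continuous family of self-adjoint bounded operators on a complex Hilbert space E, let ψ₀ be a unit vector, and let ψ : ℝ → E satisfy ψ 0 = ψ₀ and, for every t, ψ'(t) = −i·(H t)(ψ t). Then for every T ≥ 0, arccos|⟨ψ₀, ψ T⟩| ≤ ∫₀ᵀ √(‖(H t)ψ₀‖² − (Re⟨ψ₀, (H t)ψ₀⟩)²) dt. -/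
open scoped InnerProductSpace
open Real

/-!
Write `f t = ⟪ψ₀, ψ t⟫`. By self-adjointness `f' = -i ⟪H ψ₀, ψ⟫`; splitting
`H ψ₀ = a ψ₀ + v` with `a = ⟪ψ₀, H ψ₀⟫` real and `v ⊥ ψ₀`, so that `‖v‖ = ΔE₀`, gives
`f' + i a f = -i ⟪v, ψ⟫ = -i ⟪v, ψ - f ψ₀⟫`, whence `|f' + i a f| ≤ ΔE₀ √(1 - |f|²)` because `ψ`
stays a unit vector. After multiplying `f` by the phase `exp (i ∫₀ᵗ a)`, the real part `ρ` of the
overlap satisfies `ρ(0) = 1` and `ρ' ≥ -ΔE₀ √(1 - ρ²)`, and a barrier argument against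
`cos (∫₀ᵗ ΔE₀ + κ (t + 1))`, for every `κ > 0`, gives `arccos ρ(T) ≤ ∫₀ᵀ ΔE₀`.
-/

theorem cos_le_of_neg_mul_sqrt_le_deriv {ρ ρ' θ θ' D : ℝ → ℝ} {T : ℝ} (hT : 0 ≤ T)
    (hρ : ∀ t, HasDerivAt ρ (ρ' t) t) (hθ : ∀ t, HasDerivAt θ (θ' t) t)
    (hD : ∀ t, 0 ≤ D t) (hDθ : ∀ t, D t < θ' t)
    (hρ' : ∀ t, -(D t * √(1 - ρ t ^ 2)) ≤ ρ' t)
    (hρ0 : ρ 0 = 1) (hθ0 : 0 < θ 0) (hθT : θ T ≤ π) :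
    cos (θ T) ≤ ρ T := by
  have hθmono : StrictMono θ :=
    strictMono_of_hasDerivAt_pos hθ fun t => (hD t).trans_lt (hDθ t)
  have hcos : ∀ t, HasDerivAt (fun t => cos (θ t)) (-(θ' t * sin (θ t))) t := fun t => by
    simpa [mul_comm] using (hθ t).cos
  refine image_le_of_deriv_right_lt_deriv_boundary
    (fun t _ => (hcos t).continuousAt.continuousWithinAt) (fun t _ => (hcos t).hasDerivWithinAt)
    (by simpa [hρ0] using cos_le_one (θ 0)) hρ ?_ (Set.right_mem_Icc.2 hT)
  rintro t ⟨h0t, htT⟩ hcosρ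
  have hsin : 0 < sin (θ t) :=
    sin_pos_of_pos_of_lt_pi (hθ0.trans_le (hθmono.monotone h0t)) ((hθmono htT).trans_le hθT)
  have hsqrt : √(1 - ρ t ^ 2) = sin (θ t) := by
    rw [← hcosρ, ← sin_sq, sqrt_sq hsin.le]
  calc -(θ' t * sin (θ t)) < -(D t * sin (θ t)) :=
        neg_lt_neg (mul_lt_mul_of_pos_right (hDθ t) hsin)
    _ ≤ ρ' t := hsqrt ▸ hρ' t

theorem arccos_le_integral_of_neg_mul_sqrt_le_deriv {ρ ρ' D : ℝ → ℝ} {T : ℝ} (hT : 0 ≤ T)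
    (hρ : ∀ t, HasDerivAt ρ (ρ' t) t) (hD : Continuous D) (hD0 : ∀ t, 0 ≤ D t)
    (hρ' : ∀ t, -(D t * √(1 - ρ t ^ 2)) ≤ ρ' t) (hρ0 : ρ 0 = 1) :
    arccos (ρ T) ≤ ∫ t in (0 : ℝ)..T, D t := by
  set u : ℝ → ℝ := fun t => ∫ s in (0 : ℝ)..t, D s
  have hu : ∀ t, HasDerivAt u (D t) t := fun t =>
    (hD.integral_hasStrictDerivAt 0 t).hasDerivAt
  refine le_of_forall_pos_le_add fun η hη => ?_
  by_cases hπ : π ≤ u T + η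
  · exact (arccos_le_pi _).trans hπ
  set κ := η / (T + 1)
  have hκ : 0 < κ := by positivity
  have hθ : ∀ t, HasDerivAt (fun t => u t + κ * (t + 1)) (D t + κ) t := fun t => by
    have := (hu t).add (((hasDerivAt_id' t).add_const 1).const_mul κ)
    rwa [mul_one] at this
  have hθT : u T + κ * (T + 1) = u T + η := by
    simp only [κ]; field_simp
  have hcos := cos_le_of_neg_mul_sqrt_le_deriv hT hρ hθ hD0 (fun t => lt_add_of_pos_right _ hκ)
    hρ' hρ0 (by simpa [u] using hκ) (by rw [hθT]; exact (not_le.1 hπ).le)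
  have huT : 0 ≤ u T := intervalIntegral.integral_nonneg hT fun t _ => hD0 t
  calc arccos (ρ T) ≤ arccos (cos (u T + κ * (T + 1))) := arccos_le_arccos hcos
    _ = u T + η := by rw [hθT, arccos_cos (by positivity) (not_le.1 hπ).le]

theorem arccos_norm_le_integral_of_norm_deriv_le {g g' : ℝ → ℂ} {D : ℝ → ℝ} {T : ℝ} (hT : 0 ≤ T)
    (hg : ∀ t, HasDerivAt g (g' t) t) (hD : Continuous D) (hD0 : ∀ t, 0 ≤ D t)
    (hg' : ∀ t, ‖g' t‖ ≤ D t * √(1 - ‖g t‖ ^ 2)) (hg0 : g 0 = 1) :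
    arccos ‖g T‖ ≤ ∫ t in (0 : ℝ)..T, D t := by
  have hre : ∀ t, HasDerivAt (fun t => (g t).re) (g' t).re t := fun t =>
    Complex.reCLM.hasFDerivAt.comp_hasDerivAt t (hg t)
  refine (arccos_le_arccos (Complex.re_le_norm (g T))).trans <|
    arccos_le_integral_of_neg_mul_sqrt_le_deriv (ρ := fun t => (g t).re) hT hre hD hD0
      (fun t => ?_) (by rw [hg0, Complex.one_re])
  have hsq : (g t).re ^ 2 ≤ ‖g t‖ ^ 2 := by
    rw [← sq_abs]; exact pow_le_pow_left₀ (abs_nonneg _) (Complex.abs_re_le_norm _) 2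
  calc -(D t * √(1 - (g t).re ^ 2)) ≤ -(D t * √(1 - ‖g t‖ ^ 2)) :=
        neg_le_neg (mul_le_mul_of_nonneg_left (sqrt_le_sqrt (by linarith)) (hD0 t))
    _ ≤ -‖g' t‖ := neg_le_neg (hg' t)
    _ ≤ (g' t).re := neg_le_of_abs_le (Complex.abs_re_le_norm _)

theorem arccos_norm_le_integral_of_norm_deriv_add_I_mul_le {f f' : ℝ → ℂ} {a D : ℝ → ℝ} {T : ℝ}
    (hT : 0 ≤ T) (hf : ∀ t, HasDerivAt f (f' t) t) (ha : Continuous a) (hD : Continuous D)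
    (hD0 : ∀ t, 0 ≤ D t) (hf' : ∀ t, ‖f' t + Complex.I * a t * f t‖ ≤ D t * √(1 - ‖f t‖ ^ 2))
    (hf0 : f 0 = 1) :
    arccos ‖f T‖ ≤ ∫ t in (0 : ℝ)..T, D t := by
  set p : ℝ → ℂ := fun t => Complex.exp ((∫ s in (0 : ℝ)..t, a s : ℝ) * Complex.I)
  have hp : ∀ t, HasDerivAt p (p t * (a t * Complex.I)) t := fun t =>
    (((ha.integral_hasStrictDerivAt 0 t).hasDerivAt.ofReal_comp).mul_const Complex.I).cexp
  have hp1 : ∀ t, ‖p t‖ = 1 := fun t => Complex.norm_exp_ofReal_mul_I _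
  have hpf : ∀ t, HasDerivAt (fun t => p t * f t) (p t * (f' t + Complex.I * a t * f t)) t :=
    fun t => ((hp t).mul (hf t)).congr_deriv (by ring)
  simpa [hp1] using arccos_norm_le_integral_of_norm_deriv_le hT hpf hD hD0
    (fun t => by simpa [hp1] using hf' t) (by simp [p, hf0])

section InnerProductSpace

variable {𝕜 E : Type*} [RCLike 𝕜] [NormedAddCommGroup E] [InnerProductSpace 𝕜 E]

theorem inner_sub_inner_smul_self {x : E} (hx : ‖x‖ = 1) (y : E) :
    ⟪x, y - ⟪x, y⟫_𝕜 • x⟫_𝕜 = 0 := by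
  rw [inner_sub_right, inner_smul_right, inner_self_eq_norm_sq_to_K, hx]; simp

theorem norm_sub_inner_smul_sq {x : E} (hx : ‖x‖ = 1) (y : E) :
    ‖y - ⟪x, y⟫_𝕜 • x‖ ^ 2 = ‖y‖ ^ 2 - ‖⟪x, y⟫_𝕜‖ ^ 2 := by
  rw [@norm_sub_sq 𝕜, inner_smul_right, ← inner_conj_symm, RCLike.conj_mul, norm_smul, hx]
  norm_cast
  rw [RCLike.norm_conj]
  ring

theorem norm_inner_le_of_inner_eq_zero {x v : E} (hx : ‖x‖ = 1) (hv : ⟪v, x⟫_𝕜 = 0) (y : E) :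
    ‖⟪v, y⟫_𝕜‖ ≤ ‖v‖ * √(‖y‖ ^ 2 - ‖⟪x, y⟫_𝕜‖ ^ 2) := by
  have : ⟪v, y⟫_𝕜 = ⟪v, y - ⟪x, y⟫_𝕜 • x⟫_𝕜 := by
    rw [inner_sub_right, inner_smul_right, hv, mul_zero, sub_zero]
  rw [this, ← norm_sub_inner_smul_sq hx, sqrt_sq (norm_nonneg _)]
  exact norm_inner_le_norm _ _

end InnerProductSpace

theorem norm_eq_norm_zero_of_hasDerivAt_neg_I_smul {E : Type*} [NormedAddCommGroup E]
    [InnerProductSpace ℂ E] {A : ℝ → E →ₗ[ℂ] E} (hA : ∀ t, (A t).IsSymmetric) {ψ : ℝ → E}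
    (hψ : ∀ t, HasDerivAt ψ (-Complex.I • A t (ψ t)) t) (t : ℝ) : ‖ψ t‖ = ‖ψ 0‖ := by
  have hderiv : ∀ t, HasDerivAt (fun t => ⟪ψ t, ψ t⟫_ℂ) 0 t := fun t =>
    ((hψ t).inner ℂ (hψ t)).congr_deriv <| by
      rw [inner_smul_right, inner_smul_left, hA t]; simp
  have hconst := is_const_of_deriv_eq_zero (fun t => (hderiv t).differentiableAt)
    (fun t => (hderiv t).deriv) t 0
  rw [inner_self_eq_norm_sq_to_K, inner_self_eq_norm_sq_to_K] at hconst
  exact (pow_left_inj₀ (norm_nonneg _) (norm_nonneg _) two_ne_zero).1 (by exact_mod_cast hconst)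

theorem quantum_speed_limit_general
    {E : Type*} [NormedAddCommGroup E] [InnerProductSpace ℂ E]
    (H : ℝ → (E →L[ℂ] E)) (hHcont : Continuous H)
    (hHsa : ∀ t, ∀ x y : E, ⟪(H t) x, y⟫_ℂ = ⟪x, (H t) y⟫_ℂ)
    (ψ₀ : E) (hψ₀ : ‖ψ₀‖ = 1) (ψ : ℝ → E) (hinit : ψ 0 = ψ₀)
    (hψ : ∀ t, HasDerivAt ψ ((-Complex.I) • (H t) (ψ t)) t)
    (T : ℝ) (hT : 0 ≤ T) :
    Real.arccos ‖⟪ψ₀, ψ T⟫_ℂ‖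
      ≤ ∫ t in (0 : ℝ)..T,
          Real.sqrt (‖(H t) ψ₀‖ ^ 2 - ((⟪ψ₀, (H t) ψ₀⟫_ℂ).re) ^ 2) := by
  set a : ℝ → ℝ := fun t => (⟪ψ₀, H t ψ₀⟫_ℂ).re
  have ha : ∀ t, ⟪ψ₀, H t ψ₀⟫_ℂ = a t := fun t =>
    (Complex.conj_eq_iff_re.1 (by rw [inner_conj_symm, hHsa])).symm
  have hnorm : ∀ t, ‖ψ t‖ = 1 := fun t => by
    rw [norm_eq_norm_zero_of_hasDerivAt_neg_I_smul (A := fun t => (H t : E →ₗ[ℂ] E)) hHsa hψ,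
      hinit, hψ₀]
  refine arccos_norm_le_integral_of_norm_deriv_add_I_mul_le (f := fun t => ⟪ψ₀, ψ t⟫_ℂ) (a := a)
    (D := fun t => √(‖H t ψ₀‖ ^ 2 - a t ^ 2)) hT
    (fun t => (hasDerivAt_const t ψ₀).inner ℂ (hψ t)) (by fun_prop) (by fun_prop)
    (fun t => sqrt_nonneg _) (fun t => ?_) (by rw [hinit, inner_self_eq_norm_sq_to_K, hψ₀]; simp)
  set v := H t ψ₀ - ⟪ψ₀, H t ψ₀⟫_ℂ • ψ₀
  have hv : ⟪v, ψ₀⟫_ℂ = 0 := by rw [inner_eq_zero_symm]; exact inner_sub_inner_smul_self hψ₀ _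
  have hderiv : ⟪ψ₀, -Complex.I • H t (ψ t)⟫_ℂ + ⟪(0 : E), ψ t⟫_ℂ
      + Complex.I * a t * ⟪ψ₀, ψ t⟫_ℂ = -Complex.I * ⟪v, ψ t⟫_ℂ := by
    simp only [v, inner_sub_left, inner_smul_left, inner_smul_right, ha,
      Complex.conj_ofReal, inner_zero_left, hHsa t ψ₀ (ψ t)]
    ring
  calc _ = ‖⟪v, ψ t⟫_ℂ‖ := by rw [hderiv, norm_mul, norm_neg, Complex.norm_I, one_mul]
    _ ≤ ‖v‖ * √(‖ψ t‖ ^ 2 - ‖⟪ψ₀, ψ t⟫_ℂ‖ ^ 2) := norm_inner_le_of_inner_eq_zero hψ₀ hv _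
    _ = _ := by
      rw [hnorm, one_pow, ← sqrt_sq (norm_nonneg v), norm_sub_inner_smul_sq hψ₀, ha,
        Complex.norm_real, Real.norm_eq_abs, sq_abs]

/-- Quantum speed limit (in the initial state): if
`ψ 0 = ψ₀` and `ψ' t = -i (H t) (ψ t)` for all `t`, then for `T ≥ 0`,
`arccos |⟨ψ₀, ψ T⟩| ≤ ∫₀ᵀ √(‖(H t)ψ₀‖² - (Re⟨ψ₀, (H t)ψ₀⟩)²) dt`. -/
theorem quantum_speed_limit
    {E : Type*} [NormedAddCommGroup E] [InnerProductSpace ℂ E] [CompleteSpace E]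
    (H : ℝ → (E →L[ℂ] E)) (hHcont : Continuous H)
    (hHsa : ∀ t, ∀ x y : E, ⟪(H t) x, y⟫_ℂ = ⟪x, (H t) y⟫_ℂ)
    (ψ₀ : E) (hψ₀ : ‖ψ₀‖ = 1) (ψ : ℝ → E) (hinit : ψ 0 = ψ₀)
    (hψ : ∀ t, HasDerivAt ψ ((-Complex.I) • (H t) (ψ t)) t)
    (T : ℝ) (hT : 0 ≤ T) :
    Real.arccos ‖⟪ψ₀, ψ T⟫_ℂ‖
      ≤ ∫ t in (0 : ℝ)..T,
          Real.sqrt (‖(H t) ψ₀‖ ^ 2 - ((⟪ψ₀, (H t) ψ₀⟫_ℂ).re) ^ 2) :=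
  quantum_speed_limit_general H hHcont hHsa ψ₀ hψ₀ ψ hinit hψ T hT
end
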